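/- arXiv:0712.3563 — 4 statements merged into one kernel-verified Lean document; each statement's English description precedes it below -/
import Mathlib

section
/- If p ∈ ℂ[z₀,…,z₄] is a nonzero homogeneous polynomial of degree k satisfying p ∘ g₁ = p and p ∘ g₂ = p, then k is divisible by 5. -/
open MvPolynomial

/-- `ω = exp(2πi/5)`, a primitive fifth root of unity. -/
noncomputable def ω : ℂ := Complex.exp (2 * Real.pi * Complex.I / 5)

/-- Substitution `p ↦ p ∘ g₁` where `g₁(z₀,z₁,z₂,z₃,z₄) = (z₄,z₀,z₁,z₂,z₃)`;
the variable `zᵢ` of `p` receives the `i`-th coordinate `z_{i-1}` of `g₁(z)`. -/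
noncomputable def compG1 : MvPolynomial (Fin 5) ℂ →ₐ[ℂ] MvPolynomial (Fin 5) ℂ :=
  aeval fun i : Fin 5 => X (i - 1)

/-- Substitution `p ↦ p ∘ g₂` where `g₂(z₀,…,z₄) = (z₀, ω z₁, ω² z₂, ω³ z₃, ω⁴ z₄)`. -/
noncomputable def compG2 : MvPolynomial (Fin 5) ℂ →ₐ[ℂ] MvPolynomial (Fin 5) ℂ :=
  aeval fun i : Fin 5 => C (ω ^ (i : ℕ)) * X i

/-!
Pick a monomial `z^d` occurring in `p`. Since `g₂` multiplies it by `ω ^ (∑ i • dᵢ)`,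
`g₂`-invariance forces `5 ∣ ∑ i • dᵢ`. By `g₁`-invariance the cyclically shifted monomial
occurs in `p` as well, and the shift lowers `∑ i • dᵢ` by `∑ dᵢ = k` modulo 5.
-/

lemma isPrimitiveRoot_ω : IsPrimitiveRoot ω 5 := by
  convert Complex.isPrimitiveRoot_exp 5 (by norm_num) using 2
  unfold ω
  norm_num

namespace Finsupp

theorem weight_mapDomain {σ τ : Type*} (e : σ → τ) (w : τ → ℕ) (d : σ →₀ ℕ) :
    weight w (d.mapDomain e) = weight (w ∘ e) d := by
  simp only [weight_apply]
  rw [sum_mapDomain_index (by simp) (by simp [add_mul])]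
  rfl

end Finsupp

namespace Fin

theorem natCast_val_sub {n : ℕ} (i j : Fin n) :
    (((i - j : Fin n) : ℕ) : ZMod n) = (i : ℕ) - (j : ℕ) := by
  rw [Fin.val_sub, ZMod.natCast_mod, Nat.cast_add, Nat.cast_sub j.is_lt.le, ZMod.natCast_self]
  ring

theorem natCast_val_one {n : ℕ} [NeZero n] : (((1 : Fin n) : ℕ) : ZMod n) = 1 := by
  rw [Fin.val_one', ZMod.natCast_mod, Nat.cast_one]

theorem weight_val_mapDomain_sub_one {n : ℕ} [NeZero n] (d : Fin n →₀ ℕ) :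
    (Finsupp.weight (fun i : Fin n => (i : ℕ)) (d.mapDomain (· - 1)) : ZMod n) =
      Finsupp.weight (fun i : Fin n => (i : ℕ)) d - Finsupp.degree d := by
  rw [Finsupp.weight_mapDomain, Finsupp.weight_apply, Finsupp.weight_apply,
    Finsupp.degree_eq_sum, Finsupp.sum_fintype _ _ (by simp), Finsupp.sum_fintype _ _ (by simp)]
  push_cast
  rw [← Finset.sum_sub_distrib]
  refine Finset.sum_congr rfl fun i _ => ?_
  rw [Function.comp_apply, smul_eq_mul, smul_eq_mul, Nat.cast_mul, Nat.cast_mul,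
    natCast_val_sub, natCast_val_one]
  ring

end Fin

namespace MvPolynomial

variable {σ R : Type*}

theorem coeff_aeval_C_mul_X [Fintype σ] [CommSemiring R] (u : σ → R) (p : MvPolynomial σ R)
    (d : σ →₀ ℕ) : coeff d (aeval (fun i => C (u i) * X i) p) = (∏ i, u i ^ d i) * coeff d p := by
  classical
  induction p using MvPolynomial.induction_on' with
  | monomial e c =>
    have hmonomial :
        aeval (fun i => C (u i) * X i) (monomial e c) = monomial e (c * ∏ i, u i ^ e i) := by
      rw [aeval_monomial, monomial_eq, Finsupp.prod_fintype _ _ fun i => pow_zero _,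
        Finsupp.prod_fintype _ _ fun i => pow_zero _]
      simp only [mul_pow, Finset.prod_mul_distrib, ← C_pow, ← map_prod, algebraMap_eq, map_mul]
      ring
    rw [hmonomial, coeff_monomial, coeff_monomial]
    split_ifs with h
    · subst h; ring
    · ring
  | add p q hp hq => rw [map_add, coeff_add, hp, hq, coeff_add, mul_add]

theorem dvd_weight_of_aeval_C_pow_mul_X_eq_self [Fintype σ] [CommRing R] [IsDomain R] {ζ : R}
    {n : ℕ} (hζ : IsPrimitiveRoot ζ n) (w : σ → ℕ) {p : MvPolynomial σ R}
    (hp : aeval (fun i => C (ζ ^ w i) * X i) p = p) {d : σ →₀ ℕ} (hd : coeff d p ≠ 0) :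
    n ∣ Finsupp.weight w d := by
  have hcoeff := coeff_aeval_C_mul_X (fun i => ζ ^ w i) p d
  rw [hp] at hcoeff
  have hprod : ∏ i, (ζ ^ w i) ^ d i = 1 := mul_right_cancel₀ hd (by rw [one_mul, ← hcoeff])
  rw [← hζ.pow_eq_one_iff_dvd, Finsupp.weight_apply, Finsupp.sum_fintype _ _ (by simp)]
  simpa [← pow_mul, Finset.prod_pow_eq_pow_sum, mul_comm] using hprod

theorem coeff_mapDomain_ne_zero_of_rename_eq_self [CommSemiring R] {e : σ → σ}
    (he : Function.Injective e) {p : MvPolynomial σ R} (hp : rename e p = p) {d : σ →₀ ℕ}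
    (hd : coeff d p ≠ 0) : coeff (d.mapDomain e) p ≠ 0 := by
  rwa [← hp, coeff_rename_mapDomain e he]

end MvPolynomial

/-- A nonzero homogeneous polynomial of degree `k` invariant under both `g₁` and `g₂`
has degree divisible by 5. -/
theorem stmt_4 (k : ℕ) (p : MvPolynomial (Fin 5) ℂ) (hp0 : p ≠ 0)
    (hph : p ∈ homogeneousSubmodule (Fin 5) ℂ k)
    (h1 : compG1 p = p) (h2 : compG2 p = p) : 5 ∣ k := by
  obtain ⟨d, hd⟩ := exists_coeff_ne_zero hp0
  have hdeg : Finsupp.degree d = k := by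
    rw [Finsupp.degree_eq_weight_one]
    exact hph hd
  have h1' : rename (· - 1 : Fin 5 → Fin 5) p = p := by
    rwa [rename_eq_aeval]
  have hshift : coeff (d.mapDomain (· - 1)) p ≠ 0 :=
    coeff_mapDomain_ne_zero_of_rename_eq_self sub_left_injective h1' hd
  have hw := dvd_weight_of_aeval_C_pow_mul_X_eq_self isPrimitiveRoot_ω _ h2 hd
  have hw' := dvd_weight_of_aeval_C_pow_mul_X_eq_self isPrimitiveRoot_ω _ h2 hshift
  rw [← ZMod.natCast_eq_zero_iff] at hw hw' ⊢
  rwa [Fin.weight_val_mapDomain_sub_one, hw, hdeg, zero_sub, neg_eq_zero] at hw'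
end

section
/- Each of the five polynomials θ₁, θ₂, θ₃, θ₄, θ₅ is invariant under both g₁ and g₂, i.e. θᵢ ∘ g₁ = θᵢ and θᵢ ∘ g₂ = θᵢ for i = 1,…,5. -/
open MvPolynomial

/-- `θ₁ = z₀⁵+z₁⁵+z₂⁵+z₃⁵+z₄⁵` -/
noncomputable def θ1 : MvPolynomial (Fin 5) ℂ :=
  X 0 ^ 5 + X 1 ^ 5 + X 2 ^ 5 + X 3 ^ 5 + X 4 ^ 5

/-- `θ₂ = z₀z₁z₂z₃z₄` -/
noncomputable def θ2 : MvPolynomial (Fin 5) ℂ := X 0 * X 1 * X 2 * X 3 * X 4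

/-- `θ₃ = z₀³z₁z₄ + z₀z₁³z₂ + z₀z₃z₄³ + z₁z₂³z₃ + z₂z₃³z₄` -/
noncomputable def θ3 : MvPolynomial (Fin 5) ℂ :=
  X 0 ^ 3 * X 1 * X 4 + X 0 * X 1 ^ 3 * X 2 + X 0 * X 3 * X 4 ^ 3 +
    X 1 * X 2 ^ 3 * X 3 + X 2 * X 3 ^ 3 * X 4

/-- `θ₄ = z₀¹⁰+z₁¹⁰+z₂¹⁰+z₃¹⁰+z₄¹⁰` -/
noncomputable def θ4 : MvPolynomial (Fin 5) ℂ :=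
  X 0 ^ 10 + X 1 ^ 10 + X 2 ^ 10 + X 3 ^ 10 + X 4 ^ 10

/-- `θ₅ = z₀⁸z₂z₃ + z₀z₁z₃⁸ + z₀z₂⁸z₄ + z₁⁸z₃z₄ + z₁z₂z₄⁸` -/
noncomputable def θ5 : MvPolynomial (Fin 5) ℂ :=
  X 0 ^ 8 * X 2 * X 3 + X 0 * X 1 * X 3 ^ 8 + X 0 * X 2 ^ 8 * X 4 +
    X 1 ^ 8 * X 3 * X 4 + X 1 * X 2 * X 4 ^ 8

lemma hω5 : ω ^ 5 = 1 := by
  rw [ω, ← Complex.exp_nat_mul]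
  have : (5 : ℕ) * (2 * Real.pi * Complex.I / 5) = 2 * Real.pi * Complex.I := by
    push_cast; ring
  rw [this, Complex.exp_two_pi_mul_I]

lemma hC5 : (C ω : MvPolynomial (Fin 5) ℂ) ^ 5 = 1 := by
  rw [← map_pow, hω5, map_one]

lemma hsub0 : (0 : Fin 5) - 1 = 4 := rfl
lemma hsub1 : (1 : Fin 5) - 1 = 0 := rfl
lemma hsub2 : (2 : Fin 5) - 1 = 1 := rfl
lemma hsub3 : (3 : Fin 5) - 1 = 2 := rfl
lemma hsub4 : (4 : Fin 5) - 1 = 3 := rfl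

lemma hv0 : (((0 : Fin 5) : ℕ)) = 0 := rfl
lemma hv1 : (((1 : Fin 5) : ℕ)) = 1 := rfl
lemma hv2 : (((2 : Fin 5) : ℕ)) = 2 := rfl
lemma hv3 : (((3 : Fin 5) : ℕ)) = 3 := rfl
lemma hv4 : (((4 : Fin 5) : ℕ)) = 4 := rfl

/-- Each of `θ₁,…,θ₅` is invariant under both `g₁` and `g₂`. -/
theorem stmt_6 :
    (compG1 θ1 = θ1 ∧ compG2 θ1 = θ1) ∧
    (compG1 θ2 = θ2 ∧ compG2 θ2 = θ2) ∧
    (compG1 θ3 = θ3 ∧ compG2 θ3 = θ3) ∧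
    (compG1 θ4 = θ4 ∧ compG2 θ4 = θ4) ∧
    (compG1 θ5 = θ5 ∧ compG2 θ5 = θ5) := by
  have hc := hC5
  set c : MvPolynomial (Fin 5) ℂ := C ω with hcdef
  refine ⟨⟨?_, ?_⟩, ⟨?_, ?_⟩, ⟨?_, ?_⟩, ⟨?_, ?_⟩, ⟨?_, ?_⟩⟩
  · simp only [compG1, θ1, map_add, map_mul, map_pow, aeval_X,
      hsub0, hsub1, hsub2, hsub3, hsub4]
    ring
  · simp only [compG2, θ1, map_add, map_mul, map_pow, aeval_X, ← hcdef,
      hv0, hv1, hv2, hv3, hv4]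
    linear_combination (X 1 ^ 5 + (c ^ 5 + 1) * X 2 ^ 5 + (c ^ 10 + c ^ 5 + 1) * X 3 ^ 5 +
      (c ^ 15 + c ^ 10 + c ^ 5 + 1) * X 4 ^ 5) * hc
  · simp only [compG1, θ2, map_add, map_mul, map_pow, aeval_X,
      hsub0, hsub1, hsub2, hsub3, hsub4]
    ring
  · simp only [compG2, θ2, map_add, map_mul, map_pow, aeval_X, ← hcdef,
      hv0, hv1, hv2, hv3, hv4]
    linear_combination ((c ^ 5 + 1) * (X 0 * X 1 * X 2 * X 3 * X 4)) * hc
  · simp only [compG1, θ3, map_add, map_mul, map_pow, aeval_X,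
      hsub0, hsub1, hsub2, hsub3, hsub4]
    ring
  · simp only [compG2, θ3, map_add, map_mul, map_pow, aeval_X, ← hcdef,
      hv0, hv1, hv2, hv3, hv4]
    linear_combination (X 0 ^ 3 * X 1 * X 4 + X 0 * X 1 ^ 3 * X 2 +
      (c ^ 10 + c ^ 5 + 1) * (X 0 * X 3 * X 4 ^ 3) + (c ^ 5 + 1) * (X 1 * X 2 ^ 3 * X 3) +
      (c ^ 10 + c ^ 5 + 1) * (X 2 * X 3 ^ 3 * X 4)) * hc
  · simp only [compG1, θ4, map_add, map_mul, map_pow, aeval_X,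
      hsub0, hsub1, hsub2, hsub3, hsub4]
    ring
  · simp only [compG2, θ4, map_add, map_mul, map_pow, aeval_X, ← hcdef,
      hv0, hv1, hv2, hv3, hv4]
    linear_combination ((c ^ 5 + 1) * X 1 ^ 10 +
      (c ^ 15 + c ^ 10 + c ^ 5 + 1) * X 2 ^ 10 +
      (c ^ 25 + c ^ 20 + c ^ 15 + c ^ 10 + c ^ 5 + 1) * X 3 ^ 10 +
      (c ^ 35 + c ^ 30 + c ^ 25 + c ^ 20 + c ^ 15 + c ^ 10 + c ^ 5 + 1) * X 4 ^ 10) * hc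
  · simp only [compG1, θ5, map_add, map_mul, map_pow, aeval_X,
      hsub0, hsub1, hsub2, hsub3, hsub4]
    ring
  · simp only [compG2, θ5, map_add, map_mul, map_pow, aeval_X, ← hcdef,
      hv0, hv1, hv2, hv3, hv4]
    linear_combination ((X 0 ^ 8 * X 2 * X 3) +
      (c ^ 20 + c ^ 15 + c ^ 10 + c ^ 5 + 1) * (X 0 * X 1 * X 3 ^ 8) +
      (c ^ 15 + c ^ 10 + c ^ 5 + 1) * (X 0 * X 2 ^ 8 * X 4) +
      (c ^ 10 + c ^ 5 + 1) * (X 1 ^ 8 * X 3 * X 4) +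
      (c ^ 30 + c ^ 25 + c ^ 20 + c ^ 15 + c ^ 10 + c ^ 5 + 1) * (X 1 * X 2 * X 4 ^ 8)) * hc
end

section
/- The five polynomials θ₁, θ₂, θ₃, θ₄, θ₅ have only the trivial common zero: if z = (z₀,z₁,z₂,z₃,z₄) ∈ ℂ⁵ satisfies θ₁(z) = θ₂(z) = θ₃(z) = θ₄(z) = θ₅(z) = 0, then z = 0. (Hence θ₁,…,θ₅ form a homogeneous system of parameters, i.e. a valid choice of primary invariants.) -/
private lemma two_var (x y : ℂ) (h1 : x ^ 5 + y ^ 5 = 0) (h2 : x ^ 10 + y ^ 10 = 0) :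
    x = 0 ∧ y = 0 := by
  have hy : y ^ 10 = 0 := by linear_combination h2 / 2 - (x ^ 5 - y ^ 5) / 2 * h1
  have hy0 : y = 0 := by
    exact pow_eq_zero_iff (by norm_num) |>.mp hy
  subst hy0
  have hx : x ^ 5 = 0 := by linear_combination h1
  exact ⟨pow_eq_zero_iff (by norm_num) |>.mp hx, rfl⟩

private lemma key (z1 z2 z3 z4 : ℂ)
    (h1 : z1 ^ 5 + z2 ^ 5 + z3 ^ 5 + z4 ^ 5 = 0)
    (h3 : z1 * z2 ^ 3 * z3 + z2 * z3 ^ 3 * z4 = 0)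
    (h4 : z1 ^ 10 + z2 ^ 10 + z3 ^ 10 + z4 ^ 10 = 0)
    (h5 : z1 ^ 8 * z3 * z4 + z1 * z2 * z4 ^ 8 = 0) :
    z1 = 0 ∧ z2 = 0 ∧ z3 = 0 ∧ z4 = 0 := by
  by_cases hz2 : z2 = 0
  · subst hz2
    have h5' : z1 ^ 8 * (z3 * z4) = 0 := by linear_combination h5
    rcases mul_eq_zero.mp h5' with h | h
    · have hz1 : z1 = 0 := pow_eq_zero_iff (by norm_num) |>.mp h
      subst hz1
      obtain ⟨a, b⟩ := two_var z3 z4 (by linear_combination h1) (by linear_combination h4)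
      exact ⟨rfl, rfl, a, b⟩
    · rcases mul_eq_zero.mp h with h | h
      · subst h
        obtain ⟨a, b⟩ := two_var z1 z4 (by linear_combination h1) (by linear_combination h4)
        exact ⟨a, rfl, rfl, b⟩
      · subst h
        obtain ⟨a, b⟩ := two_var z1 z3 (by linear_combination h1) (by linear_combination h4)
        exact ⟨a, rfl, b, rfl⟩
  by_cases hz3 : z3 = 0
  · subst hz3
    have h5' : z1 * z2 * z4 ^ 8 = 0 := by linear_combination h5
    rcases mul_eq_zero.mp h5' with h | h
    · rcases mul_eq_zero.mp h with h | h
      · subst h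
        obtain ⟨a, b⟩ := two_var z2 z4 (by linear_combination h1) (by linear_combination h4)
        exact ⟨rfl, a, rfl, b⟩
      · exact absurd h hz2
    · have hz4 : z4 = 0 := pow_eq_zero_iff (by norm_num) |>.mp h
      subst hz4
      obtain ⟨a, b⟩ := two_var z1 z2 (by linear_combination h1) (by linear_combination h4)
      exact ⟨a, b, rfl, rfl⟩
  by_cases hz4 : z4 = 0
  · subst hz4
    have h3' : z1 * (z2 ^ 3 * z3) = 0 := by linear_combination h3
    rcases mul_eq_zero.mp h3' with h | h
    · subst h
      obtain ⟨a, b⟩ := two_var z2 z3 (by linear_combination h1) (by linear_combination h4)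
      exact ⟨rfl, a, b, rfl⟩
    · rcases mul_eq_zero.mp h with h | h
      · exact absurd (pow_eq_zero_iff (by norm_num) |>.mp h) hz2
      · exact absurd h hz3
  by_cases hz1 : z1 = 0
  · subst hz1
    have h3' : z2 * (z3 ^ 3 * z4) = 0 := by linear_combination h3
    rcases mul_eq_zero.mp h3' with h | h
    · exact absurd h hz2
    · rcases mul_eq_zero.mp h with h | h
      · exact absurd (pow_eq_zero_iff (by norm_num) |>.mp h) hz3
      · exact absurd h hz4
  exfalso
  -- all coordinates nonzero
  have hA : z1 * z2 ^ 2 + z3 ^ 2 * z4 = 0 := by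
    have h : z2 * z3 * (z1 * z2 ^ 2 + z3 ^ 2 * z4) = 0 := by linear_combination h3
    rcases mul_eq_zero.mp h with h | h
    · rcases mul_eq_zero.mp h with h | h
      · exact absurd h hz2
      · exact absurd h hz3
    · exact h
  have hB : z1 ^ 7 * z3 + z2 * z4 ^ 7 = 0 := by
    have h : z1 * z4 * (z1 ^ 7 * z3 + z2 * z4 ^ 7) = 0 := by linear_combination h5
    rcases mul_eq_zero.mp h with h | h
    · rcases mul_eq_zero.mp h with h | h
      · exact absurd h hz1
      · exact absurd h hz4
    · exact h
  have hE : z1 ^ 15 + z4 ^ 15 = 0 := by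
    have h : z3 ^ 2 * (z1 ^ 15 + z4 ^ 15) = 0 := by
      linear_combination z4 ^ 14 * hA + z1 * (z1 ^ 7 * z3 - z2 * z4 ^ 7) * hB
    exact (mul_eq_zero.mp h).resolve_left (pow_ne_zero 2 hz3)
  have h5b : z2 ^ 5 * z4 ^ 35 + z1 ^ 35 * z3 ^ 5 = 0 := by
    linear_combination (z1 ^ 28 * z3 ^ 4 - z1 ^ 21 * z3 ^ 3 * z2 * z4 ^ 7
      + z1 ^ 14 * z3 ^ 2 * z2 ^ 2 * z4 ^ 14 - z1 ^ 7 * z3 * z2 ^ 3 * z4 ^ 21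
      + z2 ^ 4 * z4 ^ 28) * hB
  have h5c : z2 ^ 5 * z4 ^ 5 + z1 ^ 5 * z3 ^ 5 = 0 := by
    have h : z4 ^ 30 * (z2 ^ 5 * z4 ^ 5 + z1 ^ 5 * z3 ^ 5) = 0 := by
      linear_combination h5b + z1 ^ 5 * z3 ^ 5 * (z4 ^ 15 - z1 ^ 15) * hE
    exact (mul_eq_zero.mp h).resolve_left (pow_ne_zero 30 hz4)
  have hstar : z1 ^ 5 * (z4 ^ 5 - z3 ^ 5) + z4 ^ 5 * (z3 ^ 5 + z4 ^ 5) = 0 := by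
    linear_combination z4 ^ 5 * h1 - h5c
  have hcase1 : z1 ^ 10 + z4 ^ 10 = 0 → False := by
    intro hq
    have had : z4 ^ 10 * (z4 ^ 5 - z1 ^ 5) = 0 := by
      linear_combination hE - z1 ^ 5 * hq
    have h2 : z4 ^ 5 - z1 ^ 5 = 0 :=
      (mul_eq_zero.mp had).resolve_left (pow_ne_zero 10 hz4)
    have hz : (2 : ℂ) * z4 ^ 15 = 0 := by
      linear_combination hE + (z4 ^ 10 + z4 ^ 5 * z1 ^ 5 + z1 ^ 10) * h2
    have : z4 ^ 15 = 0 := by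
      rcases mul_eq_zero.mp hz with h | h
      · norm_num at h
      · exact h
    exact hz4 (pow_eq_zero_iff (by norm_num) |>.mp this)
  have hprod : (z1 ^ 10 + z4 ^ 10) * (z3 ^ 10 + z4 ^ 10) = 0 := by
    linear_combination z4 ^ 10 * h4 + (z1 ^ 5 * z3 ^ 5 - z2 ^ 5 * z4 ^ 5) * h5c
  rcases mul_eq_zero.mp hprod with hq | hq
  · exact hcase1 hq
  · have hsq : z1 ^ 10 * (z4 ^ 5 - z3 ^ 5) ^ 2 - z4 ^ 10 * (z3 ^ 5 + z4 ^ 5) ^ 2 = 0 := by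
      linear_combination (z1 ^ 5 * (z4 ^ 5 - z3 ^ 5) - z4 ^ 5 * (z3 ^ 5 + z4 ^ 5)) * hstar
    have hfin : z3 ^ 5 * (z4 ^ 5 * (z1 ^ 10 + z4 ^ 10)) = 0 := by
      linear_combination (-1 / 2 : ℂ) * hsq + (1 / 2 : ℂ) * (z1 ^ 10 - z4 ^ 10) * hq
    have := ((mul_eq_zero.mp hfin).resolve_left (pow_ne_zero 5 hz3))
    exact hcase1 ((mul_eq_zero.mp this).resolve_left (pow_ne_zero 5 hz4))

/-- The primary invariants `θ₁,…,θ₅` have only the trivial common zero in `ℂ⁵`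
(hence form a homogeneous system of parameters). -/
theorem stmt_7 (z0 z1 z2 z3 z4 : ℂ)
    (h1 : z0 ^ 5 + z1 ^ 5 + z2 ^ 5 + z3 ^ 5 + z4 ^ 5 = 0)
    (h2 : z0 * z1 * z2 * z3 * z4 = 0)
    (h3 : z0 ^ 3 * z1 * z4 + z0 * z1 ^ 3 * z2 + z0 * z3 * z4 ^ 3 +
          z1 * z2 ^ 3 * z3 + z2 * z3 ^ 3 * z4 = 0)
    (h4 : z0 ^ 10 + z1 ^ 10 + z2 ^ 10 + z3 ^ 10 + z4 ^ 10 = 0)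
    (h5 : z0 ^ 8 * z2 * z3 + z0 * z1 * z3 ^ 8 + z0 * z2 ^ 8 * z4 +
          z1 ^ 8 * z3 * z4 + z1 * z2 * z4 ^ 8 = 0) :
    z0 = 0 ∧ z1 = 0 ∧ z2 = 0 ∧ z3 = 0 ∧ z4 = 0 := by
  rcases mul_eq_zero.mp h2 with h | h
  · rcases mul_eq_zero.mp h with h | h
    · rcases mul_eq_zero.mp h with h | h
      · rcases mul_eq_zero.mp h with h | h
        · -- z0 = 0
          subst h
          obtain ⟨a, b, c, d⟩ := key z1 z2 z3 z4 (by linear_combination h1)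
            (by linear_combination h3) (by linear_combination h4) (by linear_combination h5)
          exact ⟨rfl, a, b, c, d⟩
        · -- z1 = 0
          subst h
          obtain ⟨a, b, c, d⟩ := key z2 z3 z4 z0 (by linear_combination h1)
            (by linear_combination h3) (by linear_combination h4) (by linear_combination h5)
          exact ⟨d, rfl, a, b, c⟩
      · -- z2 = 0
        subst h
        obtain ⟨a, b, c, d⟩ := key z3 z4 z0 z1 (by linear_combination h1)
          (by linear_combination h3) (by linear_combination h4) (by linear_combination h5)
        exact ⟨c, d, rfl, a, b⟩
    · -- z3 = 0
      subst h
      obtain ⟨a, b, c, d⟩ := key z4 z0 z1 z2 (by linear_combination h1)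
        (by linear_combination h3) (by linear_combination h4) (by linear_combination h5)
      exact ⟨b, c, d, rfl, a⟩
  · -- z4 = 0
    subst h
    obtain ⟨a, b, c, d⟩ := key z0 z1 z2 z3 (by linear_combination h1)
      (by linear_combination h3) (by linear_combination h4) (by linear_combination h5)
    exact ⟨a, b, c, d, rfl⟩
end

section
/- The eight polynomials θ₁,…,θ₈ have only the trivial common zero: if (x₀,x₁,x₂,t₀,t₁,y₀,y₁,y₂) ∈ ℂ⁸ satisfies θ₁ = θ₂ = θ₃ = θ₄ = θ₅ = θ₆ = θ₇ = θ₈ = 0, then x₀=x₁=x₂=t₀=t₁=y₀=y₁=y₂=0. (Hence θ₁,…,θ₈ form a homogeneous system of parameters, i.e. a valid choice of primary invariants.) -/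
lemma triple (a b c : ℂ) (hp : a * b * c = 0) (hs : a + b + c = 0)
    (hq : a * b + a * c + b * c = 0) : a = 0 ∧ b = 0 ∧ c = 0 := by
  rcases mul_eq_zero.mp hp with h | h
  · rcases mul_eq_zero.mp h with h | h
    · subst h
      have hb : b = -c := by linear_combination hs
      subst hb
      have : c = 0 := by
        have : -(c * c) = 0 := by linear_combination hq
        have := neg_eq_zero.mp this
        exact pow_eq_zero_iff (n := 2) (by norm_num) |>.mp (by ring_nf; linear_combination this)
      simp [this]
    · subst h
      have ha : a = -c := by linear_combination hs
      subst ha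
      have : c = 0 := by
        have h2 : -(c * c) = 0 := by linear_combination hq
        exact pow_eq_zero_iff (n := 2) (by norm_num) |>.mp (by linear_combination -h2)
      simp [this]
  · subst h
    have ha : a = -b := by linear_combination hs
    subst ha
    have : b = 0 := by
      have h2 : -(b * b) = 0 := by linear_combination hq
      exact pow_eq_zero_iff (n := 2) (by norm_num) |>.mp (by linear_combination -h2)
    simp [this]

/-- The primary invariants `θ₁,…,θ₈` in `ℂ[x₀,x₁,x₂,t₀,t₁,y₀,y₁,y₂]` have only the
trivial common zero (hence form a homogeneous system of parameters). -/
theorem stmt_13 (x0 x1 x2 t0 t1 y0 y1 y2 : ℂ)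
    (h1 : t0 = 0)
    (h2 : t1 ^ 3 = 0)
    (h3 : x0 * x1 * x2 = 0)
    (h4 : x0 ^ 3 + x1 ^ 3 + x2 ^ 3 = 0)
    (h5 : y0 * y1 * y2 = 0)
    (h6 : y0 ^ 3 + y1 ^ 3 + y2 ^ 3 = 0)
    (h7 : x0 ^ 3 * x1 ^ 3 + x0 ^ 3 * x2 ^ 3 + x1 ^ 3 * x2 ^ 3 = 0)
    (h8 : y0 ^ 3 * y1 ^ 3 + y0 ^ 3 * y2 ^ 3 + y1 ^ 3 * y2 ^ 3 = 0) :
    x0 = 0 ∧ x1 = 0 ∧ x2 = 0 ∧ t0 = 0 ∧ t1 = 0 ∧ y0 = 0 ∧ y1 = 0 ∧ y2 = 0 := by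
  obtain ⟨hx0, hx1, hx2⟩ := triple (x0 ^ 3) (x1 ^ 3) (x2 ^ 3)
    (by linear_combination (x0 * x1 * x2) ^ 2 * h3) h4 (by linear_combination h7)
  obtain ⟨hy0, hy1, hy2⟩ := triple (y0 ^ 3) (y1 ^ 3) (y2 ^ 3)
    (by linear_combination (y0 * y1 * y2) ^ 2 * h5) h6 (by linear_combination h8)
  have p3 : ∀ z : ℂ, z ^ 3 = 0 → z = 0 := fun z hz =>
    pow_eq_zero_iff (n := 3) (by norm_num) |>.mp hz
  exact ⟨p3 _ hx0, p3 _ hx1, p3 _ hx2, h1, p3 _ h2, p3 _ hy0, p3 _ hy1, p3 _ hy2⟩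
end
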